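/- There exists a finite outerplanar graph whose track number is exactly 5 (it admits a 5-track layout but no 4-track layout). -/

import Mathlib

/-!
The witness is a 12-vertex outerplanar graph with an explicit 5-track layout. That it has no
4-track layout is checked by an exhaustive search which is proved sound for every graph: vertices
are inserted one at a time into every slot of the per-track orders of a partial layout, a branch
is abandoned as soon as an edge lies within a track or two edges form an X-crossing, and tracks
are numbered in order of first use, which loses nothing since relabelling tracks preserves
layouts.
-/

/-- A track layout of `G` with tracks indexed by `T`: an injective position map,
adjacent vertices on distinct tracks, and no X-crossing. -/
def IsTrackLayout {V : Type*} {T : Type*} (G : SimpleGraph V)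
    (track : V → T) (pos : V → ℕ) : Prop :=
  Function.Injective pos ∧
  (∀ ⦃u v⦄, G.Adj u v → track u ≠ track v) ∧
  (∀ ⦃u v x y⦄, G.Adj u v → G.Adj x y → track u = track x → track v = track y →
    pos u < pos x → pos y < pos v → False)

/-- The track number of `G`: the least `t` such that `G` has a `t`-track layout. -/
noncomputable def trackNumber {V : Type*} (G : SimpleGraph V) : ℕ :=
  sInf {t | ∃ (track : V → Fin t) (pos : V → ℕ), IsTrackLayout G track pos}

/-- A graph is outerplanar if its vertices admit a linear order (given by an injection
into `ℕ`) such that no two edges interleave (a one-page book embedding). -/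
def IsOuterplanar {V : Type*} (G : SimpleGraph V) : Prop :=
  ∃ σ : V → ℕ, Function.Injective σ ∧
    ∀ ⦃a b c d : V⦄, G.Adj a b → G.Adj c d →
      ¬(σ a < σ c ∧ σ c < σ b ∧ σ b < σ d)

theorem IsTrackLayout.comp_injective {V T T' : Type*} {G : SimpleGraph V} {track : V → T}
    {pos : V → ℕ} (h : IsTrackLayout G track pos) {f : T → T'} (hf : Function.Injective f) :
    IsTrackLayout G (f ∘ track) pos :=
  ⟨h.1, fun _ _ huv he => h.2.1 huv (hf he),
    fun _ _ _ _ huv hxy hux hvy => h.2.2 huv hxy (hf hux) (hf hvy)⟩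

theorem trackNumber_eq_succ_of_isTrackLayout {V : Type*} {G : SimpleGraph V} {t : ℕ}
    {track : V → Fin (t + 1)} {pos : V → ℕ} (h : IsTrackLayout G track pos)
    (hnot : ∀ (track : V → Fin t) (pos : V → ℕ), ¬ IsTrackLayout G track pos) :
    trackNumber G = t + 1 := by
  have hmem :
      t + 1 ∈ {t | ∃ (track : V → Fin t) (pos : V → ℕ), IsTrackLayout G track pos} :=
    ⟨track, pos, h⟩
  refine le_antisymm (Nat.sInf_le hmem) (Nat.succ_le_of_lt ?_)
  by_contra! hle
  obtain ⟨track', pos', hmin⟩ := Nat.sInf_mem ⟨_, hmem⟩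
  exact hnot _ pos' (hmin.comp_injective (Fin.castLE_injective hle))

theorem List.exists_orderedInsert_eq_take_append_cons_drop {α : Type*} (r : α → α → Prop)
    [DecidableRel r] (a : α) (l : List α) :
    ∃ p ≤ l.length, l.orderedInsert r a = l.take p ++ a :: l.drop p :=
  ⟨_, List.findIdx_le_length, by
    rw [List.orderedInsert_eq_take_drop, List.takeWhile_eq_take_findIdx_not,
      List.dropWhile_eq_drop_findIdx_not]⟩

namespace TrackSearch

variable {V : Type*}

section Lists

variable [DecidableEq V]

def after (l : List V) (v : V) : List V := (l.dropWhile (· ≠ v)).tail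

def before (l : List V) (v : V) : List V := after l.reverse v

theorem exists_eq_append_cons_of_mem_after {l : List V} {v x : V} (hx : x ∈ after l v) :
    ∃ l₁ l₂, l = l₁ ++ v :: l₂ ∧ x ∈ l₂ := by
  unfold after at hx
  obtain ⟨d, l₂, hd⟩ : ∃ d l₂, l.dropWhile (· ≠ v) = d :: l₂ := by
    cases h : l.dropWhile (· ≠ v) with
    | nil => rw [h] at hx; simp at hx
    | cons d l₂ => exact ⟨d, l₂, rfl⟩
  have hdv : d = v := by
    have h := List.head?_dropWhile_not (fun a => decide (a ≠ v)) l
    rw [hd] at h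
    simpa using h
  rw [hd] at hx
  subst hdv
  exact ⟨l.takeWhile (· ≠ d), l₂, by rw [← hd, List.takeWhile_append_dropWhile], hx⟩

theorem exists_eq_append_cons_of_mem_before {l : List V} {v y : V} (hy : y ∈ before l v) :
    ∃ l₁ l₂, l = l₁ ++ v :: l₂ ∧ y ∈ l₁ := by
  obtain ⟨l₁, l₂, hl, hy⟩ := exists_eq_append_cons_of_mem_after hy
  refine ⟨l₂.reverse, l₁.reverse, ?_, List.mem_reverse.2 hy⟩
  simpa using congrArg List.reverse hl

end Lists

def RestrictedGrowth (g : V → ℕ) : List V → ℕ → Prop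
  | [], _ => True
  | v :: vs, m => g v ≤ m ∧ RestrictedGrowth g vs (max m (g v + 1))

theorem exists_perm_restrictedGrowth {t : ℕ} (vs : List V) :
    ∀ (f : V → Fin t) (m : ℕ), ∃ π : Equiv.Perm (Fin t),
      (∀ s : Fin t, s.val < m → π s = s) ∧
        RestrictedGrowth (fun v => (π (f v)).val) vs m := by
  induction vs with
  | nil => exact fun _ _ => ⟨1, fun _ _ => rfl, trivial⟩
  | cons v vs ih =>
    intro f m
    by_cases hv : (f v).val < m
    · obtain ⟨π, hπ, hg⟩ := ih f m
      refine ⟨π, hπ, ?_, ?_⟩ <;> simp only [hπ _ hv]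
      · exact hv.le
      · simpa [Nat.succ_le_of_lt hv] using hg
    · -- move the track of `v` to the first unused track `m`
      set σ := Equiv.swap (f v) ⟨m, by omega⟩
      obtain ⟨π, hπ, hg⟩ := ih (fun w => σ (f w)) (m + 1)
      have hσ : ∀ s : Fin t, s.val < m → σ s = s := fun s hs =>
        Equiv.swap_apply_of_ne_of_ne (by omega) (Fin.ne_of_val_ne (by simp; omega))
      refine ⟨π * σ, fun s hs => ?_, ?_, ?_⟩
      · simp [hσ s hs, hπ s (by omega)]
      · simp [σ, hπ ⟨m, _⟩ (by simp)]
      · simpa [σ, hπ ⟨m, _⟩ (by simp)] using hg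

section Search

variable [DecidableEq V] (G : SimpleGraph V) [DecidableRel G.Adj]

def sameTrack (S : List (List V)) (u w : V) : Bool :=
  S.any fun l => u ∈ l && w ∈ l

def noCrossing (S : List (List V)) (u w : V) : Bool :=
  (S.flatMap (after · u)).all fun x => (S.flatMap (before · w)).all fun y => !G.Adj x y

def admissible (S : List (List V)) (v : V) : Bool :=
  S.flatten.all fun w =>
    !G.Adj v w || (!sameTrack S v w && noCrossing G S v w && noCrossing G S w v)

/-- `S` lists the vertices of each track by increasing position, and tracks `0, …, m - 1` are the
ones used so far: the next vertex is tried in every slot of each of them and of track `m`. -/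
def search (t : ℕ) : List V → ℕ → List (List V) → Bool
  | [], _, _ => true
  | v :: vs, m, S => (List.range (min t (m + 1))).any fun τ =>
      (List.range ((S.getD τ []).length + 1)).any fun p =>
        let S' := S.modify τ fun l => l.take p ++ v :: l.drop p
        admissible G S' v && search t vs (max m (τ + 1)) S'

end Search

section InducedState

variable {t : ℕ} (track : V → Fin t) (pos : V → ℕ)

def inducedState (ps : List V) : List (List V) :=
  (List.finRange t).map fun τ => (ps.filter (track · = τ)).insertionSort (pos · ≤ pos ·)

variable {track pos}

theorem inducedState_nil : inducedState track pos [] = List.replicate t [] := by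
  simp [inducedState, List.map_const']

theorem track_eq_of_mem_inducedState {ps l : List V} (hl : l ∈ inducedState track pos ps)
    {x y : V} (hx : x ∈ l) (hy : y ∈ l) : track x = track y := by
  obtain ⟨τ, -, rfl⟩ := List.mem_map.1 hl
  simp only [(List.perm_insertionSort _ _).mem_iff, List.mem_filter, decide_eq_true_eq] at hx hy
  exact hx.2.trans hy.2.symm

theorem pairwise_of_mem_inducedState (hpos : Function.Injective pos) {ps l : List V}
    (hps : ps.Nodup) (hl : l ∈ inducedState track pos ps) : l.Pairwise (pos · < pos ·) := by
  obtain ⟨τ, -, rfl⟩ := List.mem_map.1 hl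
  have : Std.Total fun a b : V => pos a ≤ pos b := ⟨fun _ _ => le_total _ _⟩
  have : IsTrans V fun a b => pos a ≤ pos b := ⟨fun _ _ _ => le_trans⟩
  have hnodup := (List.perm_insertionSort (pos · ≤ pos ·) _).nodup_iff.2
    (hps.filter fun x => decide (track x = τ))
  exact ((List.pairwise_insertionSort _ _).and hnodup).imp fun h => h.1.lt_of_ne (hpos.ne h.2)

theorem inducedState_cons (v : V) (ps : List V) :
    ∃ p ≤ ((inducedState track pos ps).getD (track v) []).length,
      inducedState track pos (v :: ps) =
        (inducedState track pos ps).modify (track v) fun l => l.take p ++ v :: l.drop p := by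
  obtain ⟨p, hp, hins⟩ := List.exists_orderedInsert_eq_take_append_cons_drop
    (pos · ≤ pos ·) v ((ps.filter (track · = track v)).insertionSort (pos · ≤ pos ·))
  refine ⟨p, by simpa [inducedState] using hp,
    List.ext_getElem (by simp [inducedState]) fun i _ _ => ?_⟩
  by_cases hi : (track v).val = i
  · subst hi
    simp [inducedState, hins]
  · simp [inducedState, hi, List.filter_cons, Fin.ext_iff]

variable [DecidableEq V]

theorem track_eq_and_lt_of_mem_after (hpos : Function.Injective pos) {ps l : List V}
    (hps : ps.Nodup) (hl : l ∈ inducedState track pos ps) {u x : V} (hx : x ∈ after l u) :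
    track u = track x ∧ pos u < pos x := by
  obtain ⟨l₁, l₂, rfl, hx₂⟩ := exists_eq_append_cons_of_mem_after hx
  refine ⟨track_eq_of_mem_inducedState hl (by simp) (by simp [hx₂]), ?_⟩
  have h := List.pairwise_append.1 (pairwise_of_mem_inducedState hpos hps hl)
  exact List.rel_of_pairwise_cons h.2.1 hx₂

theorem track_eq_and_lt_of_mem_before (hpos : Function.Injective pos) {ps l : List V}
    (hps : ps.Nodup) (hl : l ∈ inducedState track pos ps) {w y : V} (hy : y ∈ before l w) :
    track y = track w ∧ pos y < pos w := by
  obtain ⟨l₁, l₂, rfl, hy₁⟩ := exists_eq_append_cons_of_mem_before hy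
  refine ⟨track_eq_of_mem_inducedState hl (by simp [hy₁]) (by simp), ?_⟩
  have h := List.pairwise_append.1 (pairwise_of_mem_inducedState hpos hps hl)
  exact h.2.2 y hy₁ w List.mem_cons_self

variable {G : SimpleGraph V} [DecidableRel G.Adj]

theorem noCrossing_inducedState (hL : IsTrackLayout G track pos) {ps : List V} (hps : ps.Nodup)
    {u w : V} (huw : G.Adj u w) : noCrossing G (inducedState track pos ps) u w = true := by
  simp only [noCrossing, List.all_eq_true, List.mem_flatMap, Bool.not_eq_true',
    decide_eq_false_iff_not]
  rintro x ⟨l, hl, hx⟩ y ⟨l', hl', hy⟩ hxy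
  obtain ⟨hux, hpux⟩ := track_eq_and_lt_of_mem_after hL.1 hps hl hx
  obtain ⟨hyw, hpyw⟩ := track_eq_and_lt_of_mem_before hL.1 hps hl' hy
  exact hL.2.2 huw hxy hux hyw.symm hpux hpyw

theorem admissible_inducedState (hL : IsTrackLayout G track pos) {ps : List V} (hps : ps.Nodup)
    (v : V) : admissible G (inducedState track pos ps) v = true := by
  simp only [admissible, List.all_eq_true, Bool.or_eq_true, Bool.and_eq_true, Bool.not_eq_true',
    decide_eq_false_iff_not]
  intro w _
  refine or_iff_not_imp_left.2 fun hvw => ?_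
  rw [not_not] at hvw
  refine ⟨⟨?_, noCrossing_inducedState hL hps hvw⟩, noCrossing_inducedState hL hps hvw.symm⟩
  simp only [sameTrack, List.any_eq_false, Bool.and_eq_true, decide_eq_true_eq, not_and]
  exact fun l hl hv hw => hL.2.1 hvw (track_eq_of_mem_inducedState hl hv hw)

theorem search_inducedState (hL : IsTrackLayout G track pos) (vs : List V) :
    ∀ (ps : List V) (m : ℕ), (vs ++ ps).Nodup →
      RestrictedGrowth (fun v => (track v).val) vs m →
        search G t vs m (inducedState track pos ps) = true := by
  induction vs with
  | nil => exact fun _ _ _ _ => rfl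
  | cons v vs ih =>
    rintro ps m hnodup ⟨hvm, hgrowth⟩
    obtain ⟨p, hp, hstep⟩ := inducedState_cons (track := track) (pos := pos) v ps
    have hps : (v :: ps).Nodup := hnodup.sublist ((List.sublist_append_right vs ps).cons_cons v)
    simp only [search, List.any_eq_true, List.mem_range, Bool.and_eq_true]
    refine ⟨track v, lt_min (track v).isLt (Nat.lt_succ_of_le hvm), p, Nat.lt_succ_of_le hp, ?_⟩
    rw [← hstep]
    exact ⟨admissible_inducedState hL hps v,
      ih _ _ (List.perm_middle.nodup_iff.2 hnodup) hgrowth⟩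

end InducedState

theorem not_isTrackLayout_of_search_eq_false [DecidableEq V] {G : SimpleGraph V}
    [DecidableRel G.Adj] {t : ℕ} {vs : List V} (hvs : vs.Nodup)
    (h : search G t vs 0 (List.replicate t []) = false) (track : V → Fin t) (pos : V → ℕ) :
    ¬ IsTrackLayout G track pos := fun hL => by
  obtain ⟨π, -, hπ⟩ := exists_perm_restrictedGrowth vs track 0
  have := search_inducedState (hL.comp_injective π.injective) vs [] 0 (by simpa using hvs) hπ
  rw [inducedState_nil, h] at this
  exact Bool.false_ne_true this

end TrackSearch

def outerplanarWitnessEdges : List (ℕ × ℕ) :=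
  [(0, 1), (0, 2), (0, 3), (0, 4), (0, 7), (0, 8), (1, 2), (1, 3), (1, 5), (1, 10), (2, 5),
   (2, 7), (3, 4), (3, 6), (4, 6), (5, 10), (5, 11), (7, 8), (7, 9), (8, 9), (10, 11)]

def outerplanarWitness : SimpleGraph (Fin 12) :=
  SimpleGraph.fromRel fun u v => (u.val, v.val) ∈ outerplanarWitnessEdges

instance : DecidableRel outerplanarWitness.Adj :=
  inferInstanceAs (DecidableRel (SimpleGraph.fromRel _).Adj)

theorem outerplanarWitness_isOuterplanar : IsOuterplanar outerplanarWitness :=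
  ⟨![0, 4, 8, 3, 1, 7, 2, 9, 11, 10, 5, 6], by decide +kernel, by decide +kernel⟩

theorem outerplanarWitness_isTrackLayout :
    IsTrackLayout outerplanarWitness (![0, 1, 2, 2, 1, 0, 4, 3, 1, 0, 2, 1] : Fin 12 → Fin 5)
      ![5, 11, 7, 2, 6, 10, 4, 3, 1, 0, 12, 16] :=
  ⟨by decide +kernel, by decide +kernel, by decide +kernel⟩

theorem search_outerplanarWitness_four_eq_false :
    TrackSearch.search outerplanarWitness 4 (List.finRange 12) 0 (List.replicate 4 []) = false := by
  decide +kernel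

/-- There exists a finite outerplanar graph whose track number is exactly 5. -/
theorem exists_outerplanar_trackNumber_eq_five :
    ∃ (n : ℕ) (G : SimpleGraph (Fin n)), IsOuterplanar G ∧ trackNumber G = 5 :=
  ⟨12, outerplanarWitness, outerplanarWitness_isOuterplanar,
    trackNumber_eq_succ_of_isTrackLayout outerplanarWitness_isTrackLayout
      (TrackSearch.not_isTrackLayout_of_search_eq_false (List.nodup_finRange 12)
        search_outerplanarWitness_four_eq_false)⟩
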